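/- arXiv:1512.01781 — 2 statements merged into one kernel-verified Lean document; each statement's English description precedes it below -/
import Mathlib

section
/- Let G = (V, E) be a multigraph, H = (W, F) a tree, and φ : W → V an onto function such that G is the homomorphic image of H by φ. Then there exists a tree H' = (W, F') on the same vertex set W such that G is the homomorphic image of H' by the same function φ, and for every v ∈ V and every w ∈ W with φ(w) = v, the degree of w in H' is either ⌊deg_G(v)/|φ⁻¹(v)|⌋ or ⌈deg_G(v)/|φ⁻¹(v)|⌉. -/
/-- A multigraph on vertex type `V`: a finite multiset of unordered pairs of
vertices (loops and parallel edges allowed). -/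
structure Multigraph (V : Type) where
  edges : Multiset (Sym2 V)

namespace Multigraph

open Classical in
/-- The degree of a vertex: number of edge-endpoints at `v`, a loop counting twice. -/
noncomputable def deg {V : Type} (G : Multigraph V) (v : V) : ℕ :=
  (G.edges.map fun e => if e = Sym2.diag v then 2 else if v ∈ e then 1 else 0).sum

/-- Adjacency in a multigraph. -/
def Adj {V : Type} (G : Multigraph V) (u v : V) : Prop := s(u, v) ∈ G.edges

/-- A multigraph is connected if it has a vertex and any two vertices are joined by a walk. -/
def Connected {V : Type} (G : Multigraph V) : Prop :=
  Nonempty V ∧ ∀ u v : V, Relation.ReflTransGen G.Adj u v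

open Classical in
/-- `G` is the homomorphic image of `H` by the onto function `φ`: for all `u v`,
the number of edges of `G` between `u` and `v` equals the number of edges of `H`
whose endpoints are mapped by `φ` to `{u, v}`. -/
def IsHomImage {V W : Type} (G : Multigraph V) (H : Multigraph W) (φ : W → V) : Prop :=
  Function.Surjective φ ∧
    ∀ u v : V, G.edges.count s(u, v) = (H.edges.map (Sym2.map φ)).count s(u, v)

/-- A tree: a connected multigraph with `|F| = |W| - 1`. -/
def IsTree {W : Type} (H : Multigraph W) : Prop :=
  Connected H ∧ Multiset.card H.edges + 1 = Nat.card W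

/-- A multigraph is a `k`-trail if it is the homomorphic image of a (finite)
connected multigraph of maximum degree at most `k`. -/
def IsKTrail {V : Type} (G : Multigraph V) (k : ℕ) : Prop :=
  ∃ (W : Type) (_ : Finite W) (H : Multigraph W) (φ : W → V),
    Connected H ∧ (∀ w, H.deg w ≤ k) ∧ IsHomImage G H φ

/-- `G` contains a `k`-trail if some submultiset `U` of its edges gives a `k`-trail `(V, U)`. -/
def ContainsKTrail {V : Type} (G : Multigraph V) (k : ℕ) : Prop :=
  ∃ U : Multiset (Sym2 V), U ≤ G.edges ∧ IsKTrail (Multigraph.mk U) k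

/-- `lam` is a feasible multiplicity vector for `G`. -/
def FeasibleMult {V : Type} (G : Multigraph V) (lam : V → ℕ) : Prop :=
  ∃ (W : Type) (_ : Finite W) (H : Multigraph W) (φ : W → V),
    Connected H ∧ IsHomImage G H φ ∧ ∀ v : V, Nat.card (φ ⁻¹' {v}) = lam v

end Multigraph

open Multigraph

/-!
Among all connected multigraphs on `W` with the same number of edges and the same image under `φ`
as `H`, take one minimising `∑ w, deg w ^ 2`. If two vertices `a`, `b` of a fibre had
`deg b + 2 ≤ deg a`, some edge `ax` could be removed without separating `a` from `b`; replacing it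
by `bx` keeps the graph connected and its image unchanged, and lowers the potential. So in the
minimiser the degrees along each fibre differ by at most one, hence are the floor or the ceiling
of their mean, and the mean is `deg_G(v) / |φ⁻¹(v)|` because `deg_G(v)` is the sum of the degrees
over the fibre.
-/

lemma Finset.sum_sq_add_ite_eq {ι R : Type*} [Fintype ι] [DecidableEq ι] [CommSemiring R]
    (g : ι → R) (a : ι) :
    ∑ i, (g i + if a = i then 1 else 0) ^ 2 = ∑ i, g i ^ 2 + 2 * g a + 1 := by
  simp only [add_sq, Finset.sum_add_distrib, mul_ite, ite_pow, mul_one, mul_zero,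
    one_pow, Finset.sum_ite_eq, Finset.mem_univ, if_true]
  simp

lemma Finset.eq_div_or_eq_ceil_div_of_le_add_one {ι : Type*} [DecidableEq ι] {s : Finset ι}
    {f : ι → ℕ} (h : ∀ a ∈ s, ∀ b ∈ s, f a ≤ f b + 1) {w : ι} (hw : w ∈ s) :
    f w = (∑ u ∈ s, f u) / s.card ∨ f w = (∑ u ∈ s, f u + s.card - 1) / s.card := by
  obtain ⟨u₀, hu₀, hmin⟩ := s.exists_min_image f ⟨w, hw⟩
  obtain ⟨q, hq⟩ : ∃ q, s.card = q + 1 := ⟨s.card - 1, by have := s.card_pos.mpr ⟨w, hw⟩; omega⟩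
  have hcard : ∀ u ∈ s, (s.erase u).card = q := fun u hu => by
    rw [Finset.card_erase_of_mem hu]; omega
  have hlow : ∀ u ∈ s, f u + q * f u₀ ≤ ∑ u ∈ s, f u := fun u hu => by
    have := Finset.card_nsmul_le_sum (s.erase u) f _ fun x hx =>
      hmin x (Finset.mem_of_mem_erase hx)
    rw [hcard u hu, smul_eq_mul] at this
    rw [← Finset.add_sum_erase s f hu]; linarith
  have hup : ∑ u ∈ s, f u ≤ f u₀ + q * (f u₀ + 1) := by
    have := Finset.sum_le_card_nsmul (s.erase u₀) f _ fun x hx =>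
      h x (Finset.mem_of_mem_erase hx) u₀ hu₀
    rw [hcard u₀ hu₀, smul_eq_mul] at this
    rw [← Finset.add_sum_erase s f hu₀]; linarith
  have hlow₀ := hlow u₀ hu₀
  rw [hq, show ∑ u ∈ s, f u + (q + 1) - 1 = ∑ u ∈ s, f u + q by omega]
  rcases (hmin w hw).eq_or_lt with hwm | hwm
  · left
    rw [← hwm]
    exact (Nat.div_eq_of_lt_le (by linarith) (by linarith)).symm
  · right
    have hlow_w := hlow w hw
    rw [show f w = f u₀ + 1 by have := h w hw u₀ hu₀; omega] at hlow_w ⊢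
    exact (Nat.div_eq_of_lt_le (by linarith) (by linarith)).symm

namespace Multigraph

variable {V W : Type}

lemma isHomImage_iff {G : Multigraph V} {H : Multigraph W} {φ : W → V} :
    IsHomImage G H φ ↔ Function.Surjective φ ∧ G = ⟨H.edges.map (Sym2.map φ)⟩ := by
  classical
  obtain ⟨E⟩ := G
  rw [Multigraph.mk.injEq]
  refine and_congr_right fun _ => ⟨fun h => Multiset.ext.mpr fun e => ?_, fun h u v => by rw [h]⟩
  induction e using Sym2.ind with
  | _ u v => exact h u v

section Degree

lemma deg_cons_mk [DecidableEq W] (a b w : W) (F : Multiset (Sym2 W)) :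
    deg ⟨s(a, b) ::ₘ F⟩ w =
      (if a = w then 1 else 0) + (if b = w then 1 else 0) + deg ⟨F⟩ w := by
  simp only [deg, Multiset.map_cons, Multiset.sum_cons, Sym2.diag, Sym2.eq_iff, Sym2.mem_iff]
  by_cases ha : a = w <;> by_cases hb : b = w <;> simp [ha, hb, eq_comm]

lemma exists_mk_mem_of_deg_ne_zero {F : Multiset (Sym2 W)} {w : W} (h : deg ⟨F⟩ w ≠ 0) :
    ∃ x, s(w, x) ∈ F := by
  contrapose! h
  refine Multiset.sum_eq_zero fun n hn => ?_
  obtain ⟨e, he, rfl⟩ := Multiset.mem_map.mp hn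
  have hwe : w ∉ e := fun hw => by
    obtain ⟨x, rfl⟩ := Sym2.mem_iff_exists.mp hw
    exact h x he
  have hdiag : e ≠ Sym2.diag w := fun hd => hwe (hd ▸ Sym2.mem_mk_left w w)
  simp [hdiag, hwe]

lemma deg_map_eq_sum_fiber [Fintype W] [DecidableEq V] (φ : W → V) (F : Multiset (Sym2 W))
    (v : V) : deg ⟨F.map (Sym2.map φ)⟩ v = ∑ u with φ u = v, deg ⟨F⟩ u := by
  classical
  induction F using Multiset.induction_on with
  | empty => simp [deg]
  | cons e F ih =>
    induction e using Sym2.ind with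
    | _ a b =>
      simp only [Multiset.map_cons, Sym2.map_mk, deg_cons_mk, ih, Finset.sum_add_distrib,
        Finset.sum_ite_eq, Finset.mem_filter, Finset.mem_univ, true_and]

end Degree

section Reachable

abbrev Reachable (G : Multigraph W) : W → W → Prop := Relation.ReflTransGen G.Adj

instance (G : Multigraph W) : Std.Symm G.Adj where
  symm a b h := by rw [Adj, Sym2.eq_swap]; exact h

lemma Reachable.symm {G : Multigraph W} {u v : W} (h : G.Reachable u v) : G.Reachable v u :=
  Std.Symm.symm (r := Relation.ReflTransGen G.Adj) _ _ h

lemma Reachable.of_cons {e : Sym2 W} {R : Multiset (Sym2 W)} {u v : W}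
    (h : Reachable ⟨R⟩ u v) : Reachable ⟨e ::ₘ R⟩ u v :=
  Relation.ReflTransGen.mono (fun _ _ hab => Multiset.mem_cons_of_mem hab) _ _ h

lemma Reachable.cases_of_cons {a b u z : W} {R : Multiset (Sym2 W)}
    (h : Reachable ⟨s(a, b) ::ₘ R⟩ u z) :
    Reachable ⟨R⟩ u z ∨ Reachable ⟨R⟩ a z ∨ Reachable ⟨R⟩ b z := by
  induction h with
  | refl => exact Or.inl .refl
  | @tail c d _ hcd ih =>
    rcases Multiset.mem_cons.mp hcd with hab | hR
    · rcases Sym2.eq_iff.mp hab with ⟨_, rfl⟩ | ⟨_, rfl⟩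
      · exact Or.inr (Or.inr .refl)
      · exact Or.inr (Or.inl .refl)
    · exact ih.imp (·.tail hR) (Or.imp (·.tail hR) (·.tail hR))

lemma Reachable.move_end {a b x u v : W} {R : Multiset (Sym2 W)} (hab : Reachable ⟨R⟩ a b)
    (h : Reachable ⟨s(a, x) ::ₘ R⟩ u v) : Reachable ⟨s(b, x) ::ₘ R⟩ u v := by
  have hax : Reachable ⟨s(b, x) ::ₘ R⟩ a x :=
    hab.of_cons.tail (Multiset.mem_cons_self _ _)
  refine Relation.ReflTransGen.lift' id (fun c d hcd => ?_) _ _ h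
  rcases Multiset.mem_cons.mp hcd with hcd | hR
  · rcases Sym2.eq_iff.mp hcd with ⟨rfl, rfl⟩ | ⟨rfl, rfl⟩
    · exact hax
    · exact hax.symm
  · exact .single (Multiset.mem_cons_of_mem hR)

-- If dropping an edge `wx₁` cuts `w` off from `y`, then dropping any other edge `wx₂` does not.
lemma exists_eq_cons_reachable_of_two_le_deg {F : Multiset (Sym2 W)} {w y : W}
    (hdeg : 2 ≤ deg ⟨F⟩ w) (hwy : Reachable ⟨F⟩ w y) :
    ∃ x R, F = s(w, x) ::ₘ R ∧ Reachable ⟨R⟩ w y := by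
  classical
  obtain ⟨x₁, hx₁⟩ := exists_mk_mem_of_deg_ne_zero (F := F) (w := w) (by omega)
  obtain ⟨R₁, rfl⟩ := Multiset.exists_cons_of_mem hx₁
  by_cases hR₁ : Reachable ⟨R₁⟩ w y
  · exact ⟨x₁, R₁, rfl, hR₁⟩
  have hx₁y : Reachable ⟨R₁⟩ x₁ y := by
    rcases hwy.cases_of_cons with h | h | h
    exacts [absurd h hR₁, absurd h hR₁, h]
  have hx₁w : x₁ ≠ w := by rintro rfl; exact hR₁ hx₁y
  rw [deg_cons_mk, if_pos rfl, if_neg hx₁w] at hdeg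
  obtain ⟨x₂, hx₂⟩ := exists_mk_mem_of_deg_ne_zero (F := R₁) (w := w) (by omega)
  obtain ⟨R, rfl⟩ := Multiset.exists_cons_of_mem hx₂
  have hw₂ : Reachable ⟨s(w, x₂) ::ₘ R⟩ w x₂ := .single (Multiset.mem_cons_self _ _)
  rcases hx₁y.cases_of_cons with h | h | h
  · refine ⟨x₂, s(w, x₁) ::ₘ R, Multiset.cons_swap _ _ _, ?_⟩
    exact Relation.ReflTransGen.head (Multiset.mem_cons_self _ _) h.of_cons
  · exact absurd h.of_cons hR₁
  · exact absurd (hw₂.trans h.of_cons) hR₁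

end Reachable

section Balancing

variable [Fintype W]

noncomputable def degSqSum (F : Multiset (Sym2 W)) : ℕ := ∑ w, deg ⟨F⟩ w ^ 2

lemma degSqSum_move_end_lt {a b x : W} {R : Multiset (Sym2 W)} (hab : a ≠ b)
    (hdeg : deg ⟨s(a, x) ::ₘ R⟩ b + 2 ≤ deg ⟨s(a, x) ::ₘ R⟩ a) :
    degSqSum (s(b, x) ::ₘ R) < degSqSum (s(a, x) ::ₘ R) := by
  classical
  set g : W → ℕ := fun w => (if x = w then 1 else 0) + deg ⟨R⟩ w
  have hdeg_cons : ∀ c w, deg ⟨s(c, x) ::ₘ R⟩ w = g w + if c = w then 1 else 0 := by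
    intro c w; rw [deg_cons_mk]; ring
  simp only [degSqSum, hdeg_cons, Finset.sum_sq_add_ite_eq, if_neg hab, if_pos] at hdeg ⊢
  omega

lemma exists_balanced (φ : W → V) (F₀ : Multiset (Sym2 W))
    (hF₀ : ∀ u v, Reachable ⟨F₀⟩ u v) :
    ∃ F : Multiset (Sym2 W), (∀ u v, Reachable ⟨F⟩ u v) ∧ F.card = F₀.card ∧
      F.map (Sym2.map φ) = F₀.map (Sym2.map φ) ∧
      ∀ a b, φ a = φ b → deg ⟨F⟩ a ≤ deg ⟨F⟩ b + 1 := by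
  let S : Set (Multiset (Sym2 W)) := {F | (∀ u v, Reachable ⟨F⟩ u v) ∧ F.card = F₀.card ∧
      F.map (Sym2.map φ) = F₀.map (Sym2.map φ)}
  obtain ⟨F, ⟨hconn, hcard, hmap⟩, hmin⟩ :=
    (InvImage.wf degSqSum wellFounded_lt).has_min S ⟨F₀, hF₀, rfl, rfl⟩
  refine ⟨F, hconn, hcard, hmap, fun a b hφ => ?_⟩
  by_contra! hlt
  have hab : a ≠ b := by rintro rfl; omega
  obtain ⟨x, R, rfl, hR⟩ := exists_eq_cons_reachable_of_two_le_deg (by omega) (hconn a b)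
  refine hmin (s(b, x) ::ₘ R) ⟨fun u v => hR.move_end (hconn u v), ?_, ?_⟩
    (degSqSum_move_end_lt hab (by omega))
  · simpa using hcard
  · simpa [hφ] using hmap

end Balancing

end Multigraph

theorem balancing_general {V W : Type} [Finite W]
    (G : Multigraph V) (H : Multigraph W) (φ : W → V)
    (htree : IsTree H) (h : IsHomImage G H φ) :
    ∃ H' : Multigraph W, IsTree H' ∧ IsHomImage G H' φ ∧
      ∀ v : V, ∀ w : W, φ w = v →
        H'.deg w = G.deg v / Nat.card (φ ⁻¹' {v}) ∨
        H'.deg w = (G.deg v + Nat.card (φ ⁻¹' {v}) - 1) / Nat.card (φ ⁻¹' {v}) := by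
  classical
  have := Fintype.ofFinite W
  obtain ⟨⟨hne, hconn⟩, hcard⟩ := htree
  obtain ⟨hφ, hG⟩ := isHomImage_iff.mp h
  obtain ⟨F, hFconn, hFcard, hFmap, hbal⟩ := exists_balanced φ H.edges hconn
  refine ⟨⟨F⟩, ⟨⟨hne, hFconn⟩, hFcard ▸ hcard⟩, isHomImage_iff.mpr ⟨hφ, hFmap ▸ hG⟩, ?_⟩
  rintro v w rfl
  have hfiber : Nat.card (φ ⁻¹' {φ w}) = (Finset.univ.filter fun u => φ u = φ w).card := by
    rw [Nat.card_eq_fintype_card, ← Fintype.card_subtype]; rfl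
  rw [hG, ← hFmap, deg_map_eq_sum_fiber, hfiber]
  exact Finset.eq_div_or_eq_ceil_div_of_le_add_one
    (fun a ha b hb => hbal a b ((Finset.mem_filter.mp ha).2.trans (Finset.mem_filter.mp hb).2.symm))
    (by simp)

/-- Degree balancing: if `G` is the homomorphic image of a tree `H = (W, F)` by `φ`,
then there is a tree `H' = (W, F')` on the same vertex set such that `G` is the
homomorphic image of `H'` by the same `φ`, and every `w ∈ φ⁻¹(v)` has degree
`⌊deg_G(v)/|φ⁻¹(v)|⌋` or `⌈deg_G(v)/|φ⁻¹(v)|⌉` in `H'`. -/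
theorem balancing {V W : Type} [Finite V] [Finite W]
    (hV : 2 ≤ Nat.card V)
    (G : Multigraph V) (H : Multigraph W) (φ : W → V)
    (htree : IsTree H) (h : IsHomImage G H φ) :
    ∃ H' : Multigraph W, IsTree H' ∧ IsHomImage G H' φ ∧
      ∀ v : V, ∀ w : W, φ w = v →
        H'.deg w = G.deg v / Nat.card (φ ⁻¹' {v}) ∨
        H'.deg w = (G.deg v + Nat.card (φ ⁻¹' {v}) - 1) / Nat.card (φ ⁻¹' {v}) :=
  balancing_general G H φ htree h
end

section
/- Let G = (V, E) be a multigraph and μ ∈ ℤ_{≥0}^V. The following are equivalent: (i) G is the homomorphic image of a connected multigraph H = (W, F) by an onto function φ : W → V with |φ⁻¹(v)| = μ(v) + 1 for all v ∈ V; (ii) G is the homomorphic image of a tree H = (W, F) by an onto function φ : W → V with |φ⁻¹(v)| ≥ μ(v) + 1 for all v ∈ V. -/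
open Multigraph

/-!
(i) ⇒ (ii): take a spanning tree `T` of `H`. Each edge `{a, b}` of `H` outside `T` is replaced by
a new leaf hanging at `b` and mapped to `φ a`; the result is still a tree, has the same image
multigraph, and its fibres only grow.

(ii) ⇒ (i): surject each fibre `φ⁻¹(v)` onto `μ v + 1` points, i.e. factor `φ` through
`Σ v, Fin (μ v + 1)`. The image of a connected multigraph under a surjection is connected, and
composing with `Sigma.fst` gives back the image multigraph of `φ`.
-/

theorem card_preimage_le_of_comp_eq {V W W' : Type} [Finite W'] {ι : W → W'}
    (hι : Function.Injective ι) {φ : W → V} {φ' : W' → V} (h : φ' ∘ ι = φ) (v : V) :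
    Nat.card (φ ⁻¹' {v}) ≤ Nat.card (φ' ⁻¹' {v}) := by
  subst h
  exact Nat.card_le_card_of_injective (fun x => ⟨ι x, x.2⟩)
    fun x y hxy => Subtype.ext (hι (congrArg Subtype.val hxy))

theorem exists_surjective_fin_of_lt_card {α : Type} [Finite α] {n : ℕ} (h : n < Nat.card α) :
    ∃ f : α → Fin (n + 1), Function.Surjective f :=
  let e : Fin (n + 1) ↪ α := (Fin.castLEEmb h).trans (Finite.equivFin α).symm.toEmbedding
  ⟨Function.invFun e, Function.invFun_surjective e.injective⟩

theorem exists_surjective_sigma_fin {V W : Type} [Finite W] (φ : W → V) (μ : V → ℕ)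
    (h : ∀ v, μ v < Nat.card (φ ⁻¹' {v})) :
    ∃ f : W → Σ v, Fin (μ v + 1), Function.Surjective f ∧ Sigma.fst ∘ f = φ := by
  choose s hs using fun v => exists_surjective_fin_of_lt_card (h v)
  refine ⟨fun w => ⟨φ w, s (φ w) ⟨w, rfl⟩⟩, ?_, rfl⟩
  rintro ⟨v, i⟩
  obtain ⟨⟨w, rfl⟩, rfl⟩ := hs v i
  exact ⟨w, rfl⟩

theorem card_preimage_sigma_fst {V : Type} {β : V → Type} (v : V) :
    Nat.card (Sigma.fst ⁻¹' {v} : Set (Σ v, β v)) = Nat.card (β v) :=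
  Nat.card_congr (Equiv.sigmaSubtype v)

namespace Multigraph

variable {V W : Type}

def map (f : W → V) (H : Multigraph W) : Multigraph V :=
  ⟨H.edges.map (Sym2.map f)⟩

theorem Adj.symm {H : Multigraph W} {a b : W} (h : H.Adj a b) : H.Adj b a := by
  rwa [Adj, Sym2.eq_swap]

theorem Adj.map {H : Multigraph W} {a b : W} (h : H.Adj a b) (f : W → V) :
    (H.map f).Adj (f a) (f b) :=
  Multiset.mem_map_of_mem _ h

theorem reflTransGen_adj_map {H : Multigraph W} {a b : W} (f : W → V)
    (h : Relation.ReflTransGen H.Adj a b) : Relation.ReflTransGen (H.map f).Adj (f a) (f b) :=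
  Relation.ReflTransGen.lift f (fun _ _ hab => hab.map f) _ _ h

theorem Connected.map {H : Multigraph W} (h : H.Connected) {f : W → V}
    (hf : Function.Surjective f) : (H.map f).Connected := by
  refine ⟨h.1.map f, fun u v => ?_⟩
  obtain ⟨a, rfl⟩ := hf u
  obtain ⟨b, rfl⟩ := hf v
  exact reflTransGen_adj_map f (h.2 a b)

theorem map_edges_map (H : Multigraph W) {K : Type} (f : W → K) (g : K → V) :
    (H.map f).edges.map (Sym2.map g) = H.edges.map (Sym2.map (g ∘ f)) := by
  simp [Multigraph.map, Multiset.map_map, Sym2.map_map]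

theorem IsHomImage.of_map_edges_eq {W' : Type} {G : Multigraph V} {H : Multigraph W}
    {H' : Multigraph W'} {φ : W → V} {φ' : W' → V} (h : G.IsHomImage H φ)
    (hφ' : Function.Surjective φ')
    (he : H'.edges.map (Sym2.map φ') = H.edges.map (Sym2.map φ)) : G.IsHomImage H' φ' :=
  ⟨hφ', fun u v => he ▸ h.2 u v⟩

theorem IsTree.finite {H : Multigraph W} (h : H.IsTree) : Finite W :=
  Nat.finite_of_card_ne_zero (by rw [← h.2]; omega)

def addLeaf (H : Multigraph W) (w : W) : Multigraph (Option W) :=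
  ⟨s(none, some w) ::ₘ (H.map some).edges⟩

theorem IsTree.addLeaf {H : Multigraph W} (h : H.IsTree) (w : W) : (H.addLeaf w).IsTree := by
  have := h.finite
  have hsome : ∀ a b, Relation.ReflTransGen (H.addLeaf w).Adj (some a) (some b) := fun a b =>
    Relation.ReflTransGen.mono (fun _ _ hab => Multiset.mem_cons_of_mem hab) _ _
      (reflTransGen_adj_map some (h.1.2 a b))
  have hleaf : (H.addLeaf w).Adj none (some w) := Multiset.mem_cons_self _ _
  refine ⟨⟨⟨none⟩, ?_⟩, ?_⟩
  · rintro (_ | a) (_ | b)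
    · rfl
    · exact (Relation.ReflTransGen.single hleaf).trans (hsome w b)
    · exact (hsome a w).tail hleaf.symm
    · exact hsome a b
  · simp [Multigraph.addLeaf, Multigraph.map, Finite.card_option, ← h.2]

theorem IsTree.exists_unfold {T : Multigraph W} (hT : T.IsTree) (φ : W → V)
    (D : Multiset (Sym2 W)) :
    ∃ (W' : Type) (T' : Multigraph W') (ι : W → W') (φ' : W' → V), T'.IsTree ∧
      Function.Injective ι ∧ φ' ∘ ι = φ ∧
      T'.edges.map (Sym2.map φ') = (T.edges + D).map (Sym2.map φ) := by
  induction D using Multiset.induction_on with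
  | empty => exact ⟨W, T, id, φ, hT, Function.injective_id, rfl, by simp⟩
  | cons e D ih =>
    obtain ⟨W', T', ι, φ', hT', hι, hφ, hE⟩ := ih
    induction e using Sym2.ind with
    | _ a b =>
    refine ⟨Option W', T'.addLeaf (ι b), some ∘ ι, fun o => o.elim (φ a) φ', hT'.addLeaf _,
      (Option.some_injective _).comp hι, hφ, ?_⟩
    show (s(none, some (ι b)) ::ₘ (T'.map some).edges).map _ = _
    rw [Multiset.map_cons, map_edges_map, Multiset.add_cons, Multiset.map_cons, ← hE, ← hφ]
    rfl

theorem Connected.exists_le_isTree [Finite W] {H : Multigraph W} (h : H.Connected) :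
    ∃ T ≤ H.edges, IsTree ⟨T⟩ := by
  classical
  have := Fintype.ofFinite W
  let S := SimpleGraph.fromEdgeSet {e | e ∈ H.edges}
  have hS : S.Connected := by
    refine (SimpleGraph.connected_iff _).2 ⟨fun u v => ?_, h.1⟩
    refine (SimpleGraph.reachable_iff_reflTransGen u v).2 <|
      Relation.ReflTransGen.lift' id (fun a b hab => ?_) _ _ (h.2 u v)
    by_cases hab' : a = b
    · exact hab' ▸ Relation.ReflTransGen.refl
    · exact .single (SimpleGraph.fromEdgeSet_adj _ |>.2 ⟨hab, hab'⟩)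
  obtain ⟨T, hTS, hT⟩ := hS.exists_isTree_le
  have hadj : ∀ a b, T.Adj a b → Adj ⟨T.edgeFinset.val⟩ a b := fun a b hab => by
    simpa [Adj] using hab
  refine ⟨T.edgeFinset.val, (Multiset.le_iff_subset T.edgeFinset.nodup).2 fun e he => ?_,
    ⟨⟨h.1, fun u v => ?_⟩, ?_⟩⟩
  · have := SimpleGraph.edgeSet_mono hTS (SimpleGraph.mem_edgeFinset.1 he)
    rw [SimpleGraph.edgeSet_fromEdgeSet] at this
    exact this.1
  · exact Relation.ReflTransGen.mono hadj _ _
      ((SimpleGraph.reachable_iff_reflTransGen u v).1 (hT.1.preconnected u v))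
  · simpa [Nat.card_eq_fintype_card] using hT.card_edgeFinset

end Multigraph

theorem connected_exact_iff_tree_ge_general {V : Type}
    (G : Multigraph V) (μ : V → ℕ) :
    (∃ (W : Type) (_ : Finite W) (H : Multigraph W) (φ : W → V),
        Connected H ∧ IsHomImage G H φ ∧ ∀ v : V, Nat.card (φ ⁻¹' {v}) = μ v + 1) ↔
    (∃ (W : Type) (_ : Finite W) (H : Multigraph W) (φ : W → V),
        IsTree H ∧ IsHomImage G H φ ∧ ∀ v : V, μ v + 1 ≤ Nat.card (φ ⁻¹' {v})) := by
  classical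
  constructor
  · rintro ⟨W, _, H, φ, hH, hG, hμ⟩
    obtain ⟨T, hTH, hT⟩ := hH.exists_le_isTree
    obtain ⟨W', T', ι, φ', hT', hι, hφ, hE⟩ := hT.exists_unfold φ (H.edges - T)
    have := hT'.finite
    refine ⟨W', this, T', φ', hT', hG.of_map_edges_eq (hφ ▸ hG.1).of_comp ?_, fun v => ?_⟩
    · rwa [add_tsub_cancel_of_le hTH] at hE
    · exact hμ v ▸ card_preimage_le_of_comp_eq hι hφ v
  · rintro ⟨W, _, H, φ, hH, hG, hμ⟩
    obtain ⟨f, hf, hfφ⟩ := exists_surjective_sigma_fin φ μ hμ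
    refine ⟨_, Finite.of_surjective f hf, H.map f, Sigma.fst, hH.1.map hf,
      hG.of_map_edges_eq (hfφ ▸ hG.1).of_comp ?_, fun v => ?_⟩
    · rw [map_edges_map, hfφ]
    · rw [card_preimage_sigma_fst, Nat.card_eq_fintype_card, Fintype.card_fin]

/-- `G` is the homomorphic image of a connected multigraph with multiplicities exactly
`μ + 1` iff `G` is the homomorphic image of a tree with multiplicities at least `μ + 1`. -/
theorem connected_exact_iff_tree_ge {V : Type} [Finite V]
    (hV : 2 ≤ Nat.card V)
    (G : Multigraph V) (μ : V → ℕ) :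
    (∃ (W : Type) (_ : Finite W) (H : Multigraph W) (φ : W → V),
        Connected H ∧ IsHomImage G H φ ∧ ∀ v : V, Nat.card (φ ⁻¹' {v}) = μ v + 1) ↔
    (∃ (W : Type) (_ : Finite W) (H : Multigraph W) (φ : W → V),
        IsTree H ∧ IsHomImage G H φ ∧ ∀ v : V, μ v + 1 ≤ Nat.card (φ ⁻¹' {v})) :=
  connected_exact_iff_tree_ge_general G μ
end
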